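/- Let C be a small category equipped with a Grothendieck topology J, T a small category, and τ : C ⥤ T a functor. Then the forgetful functor U : Mod^T ⥤ Sh(C,J), sending a Linton model M to the J-sheaf c ↦ M(τ c) (and a natural transformation to its whiskering with τ), admits a left adjoint F (the 'free model' functor). -/

import Mathlib

open CategoryTheory

universe u

variable {C : Type u} [SmallCategory C] (J : GrothendieckTopology C)
variable {T : Type u} [SmallCategory T] (τ : C ⥤ T)

/-- The forgetful functor from Linton models of `τ : C ⥤ T` to `J`-sheaves on `C`,
sending a model `M` to the sheaf `c ↦ M (τ c)` and a natural transformation to its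
whiskering with `τ`. -/
def lintonForget :
    ObjectProperty.FullSubcategory (fun M : Tᵒᵖ ⥤ Type u => Presieve.IsSheaf J (τ.op ⋙ M)) ⥤
      Sheaf J (Type u) where
  obj M := ⟨τ.op ⋙ M.obj, (isSheaf_iff_isSheaf_of_type J (τ.op ⋙ M.obj)).mpr M.property⟩
  map f := ⟨Functor.whiskerLeft τ.op f.hom⟩

/-!
A presheaf `M` on `T` is a Linton model iff `τ^* M` is orthogonal to every covering sieve
inclusion `S ↪ y c`, i.e. (by `τ_! ⊣ τ^*`) iff `M` is orthogonal to the small set of maps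
`τ_! (S ↪ y c)`. In the locally presentable category of presheaves on `T`, the objects orthogonal
to a small set of maps form a reflective subcategory, so `τ^*` restricted to models has the left
adjoint `reflection ∘ τ_!`. That restriction is `U` followed by the fully faithful inclusion of
sheaves into presheaves, hence `U` is a right adjoint as well.
-/

universe w v

namespace CategoryTheory

lemma exists_isCardinalPresentable_forall {D : Type u} [Category.{v} D] {ι : Type*}
    [Small.{w} ι] (X : ι → D) [∀ i, IsPresentable.{w} (X i)] :
    ∃ (κ : Cardinal.{w}) (_ : Fact κ.IsRegular), ∀ i, IsCardinalPresentable (X i) κ := by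
  choose κ _ _ using fun i => Functor.IsAccessible.exists_cardinal (F := coyoneda.obj (.op (X i)))
  obtain ⟨κ', hκ', hlt⟩ :=
    HasCardinalLT.exists_regular_cardinal_forall.{w} fun i => (κ i).ord.ToType
  have : Fact κ'.IsRegular := ⟨hκ'⟩
  exact ⟨κ', this, fun i => isCardinalPresentable_of_le (X i)
    (le_of_lt (by simpa [hasCardinalLT_iff_cardinal_mk_lt] using hlt i))⟩

namespace MorphismProperty

lemma isLocal_ofHoms_iff {D : Type*} [Category D] {ι : Type*} {X Y : ι → D}
    (f : ∀ i, X i ⟶ Y i) (Z : D) :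
    (ofHoms f).isLocal Z ↔ ∀ i, Function.Bijective (fun g : Y i ⟶ Z => f i ≫ g) :=
  ⟨fun h i => h _ ⟨i⟩, fun h _ _ _ ⟨i⟩ => h i⟩

lemma isRightAdjoint_ι_isLocal_of_isSmall {D : Type u} [Category.{v} D]
    [IsLocallyPresentable.{w} D] (W : MorphismProperty D) [W.IsSmall.{w}] :
    W.isLocal.ι.IsRightAdjoint := by
  obtain ⟨κ₀, _, _⟩ := IsLocallyPresentable.exists_cardinal.{w} D
  obtain ⟨κ, _, hκ⟩ := exists_isCardinalPresentable_forall
    (Sum.elim (fun f : W.toSet => f.1.left) (fun f : W.toSet => f.1.right))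
  exact isRightAdjoint_ι_isLocal W κ fun _ _ f hf =>
    ⟨hκ (.inl ⟨CategoryTheory.Arrow.mk f, hf⟩), hκ (.inr ⟨CategoryTheory.Arrow.mk f, hf⟩)⟩

end MorphismProperty

lemma Presieve.isSheaf_iff_bijective_functorInclusion_comp {D : Type u} [Category.{v} D]
    (K : GrothendieckTopology D) (P : Dᵒᵖ ⥤ Type v) :
    Presieve.IsSheaf K P ↔ ∀ (c : D) (S : K.Cover c),
      Function.Bijective (fun g : yoneda.obj c ⟶ P => (S : Sieve c).functorInclusion ≫ g) := by
  simp only [Presieve.IsSheaf, Presieve.isSheafFor_iff_yonedaSheafCondition,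
    Presieve.YonedaSheafCondition, Function.bijective_iff_existsUnique]
  exact ⟨fun h c S => h S.1 S.2, fun h c S hS => h c ⟨S, hS⟩⟩

lemma Functor.isRightAdjoint_of_isRightAdjoint_comp {D D' E : Type*} [Category D] [Category D']
    [Category E] {R : E ⥤ D} {i : D ⥤ D'} (hi : i.FullyFaithful) [(R ⋙ i).IsRightAdjoint] :
    R.IsRightAdjoint :=
  ((Adjunction.ofIsRightAdjoint (R ⋙ i)).restrictFullyFaithful (L := i ⋙ (R ⋙ i).leftAdjoint)
    hi (Functor.FullyFaithful.id _) (Iso.refl _) (Iso.refl _)).isRightAdjoint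

end CategoryTheory

def lintonCoveringMaps : MorphismProperty (Tᵒᵖ ⥤ Type u) :=
  MorphismProperty.ofHoms fun S : Σ c, J.Cover c =>
    τ.op.lan.map (S.2 : Sieve S.1).functorInclusion

instance : (lintonCoveringMaps J τ).IsSmall.{u} := MorphismProperty.isSmall_ofHoms _

lemma isLocal_lintonCoveringMaps :
    (lintonCoveringMaps J τ).isLocal = fun M => Presieve.IsSheaf J (τ.op ⋙ M) := by
  ext M
  rw [lintonCoveringMaps, MorphismProperty.isLocal_ofHoms_iff,
    Presieve.isSheaf_iff_bijective_functorInclusion_comp, Sigma.forall]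
  exact forall₂_congr fun _ _ => (τ.op.lanAdjunction (Type u)).map_comp_bijective_iff _ M

lemma isRightAdjoint_ι_lintonModels :
    (ObjectProperty.ι fun M : Tᵒᵖ ⥤ Type u => Presieve.IsSheaf J (τ.op ⋙ M)).IsRightAdjoint := by
  rw [← isLocal_lintonCoveringMaps]
  exact (lintonCoveringMaps J τ).isRightAdjoint_ι_isLocal_of_isSmall

/-- For a Linton theory `τ : C ⥤ T` over a site `(C, J)`, the forgetful
functor `U : Mod^T ⥤ Sh(C, J)` admits a left adjoint (the free model functor). -/
theorem lintonForget_isRightAdjoint : (lintonForget J τ).IsRightAdjoint := by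
  have := isRightAdjoint_ι_lintonModels J τ
  have := (τ.op.lanAdjunction (Type u)).isRightAdjoint
  have : (lintonForget J τ ⋙ sheafToPresheaf J (Type u)).IsRightAdjoint :=
    inferInstanceAs (ObjectProperty.ι _ ⋙ (Functor.whiskeringLeft _ _ _).obj τ.op).IsRightAdjoint
  exact Functor.isRightAdjoint_of_isRightAdjoint_comp (fullyFaithfulSheafToPresheaf J _)
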